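/- ∏_{n≥0} [((4n+1)(4n+4)) / ((4n+2)(4n+3))]^{t_n} = π^{3/4}·√2 / Γ(1/4). -/

import Mathlib

open Filter Finset Topology

def tm (n : ℕ) : ℕ := (Nat.digits 2 n).sum % 2

/-!
Write `εₙ = (-1) ^ tm n` and `aₙ` for the factors. Since `aₙ ^ (2 tm n) = aₙ / aₙ ^ εₙ`, the square
of the product is `∏ aₙ / ∏ aₙ ^ εₙ`. By Euler's limit formula the unsigned product is
`Γ(1/2) Γ(3/4) / Γ(1/4)`, because `aₙ = (n + 1/4)(n + 1) / ((n + 1/2)(n + 3/4))` and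
`1/4 + 1 = 1/2 + 3/4`. The signed product is the Woods–Robbins product
`P = ∏ ((2n+1)/(2n+2)) ^ εₙ` with consecutive factors grouped in pairs, and `P = 1/√2` by Robbins'
argument: with `Q = ∏_{n ≥ 1} (2n/(2n+1)) ^ εₙ`, splitting `∏_{n ≥ 1} (n/(n+1)) ^ εₙ` along even
and odd `n` gives `P Q = Q / (2 P)`. As `P` and `Q` converge only conditionally, this is run on
partial products of even length, where the pairs converge absolutely. The reflection formula
`Γ(1/4) Γ(3/4) = π √2` then gives the value.
-/

open Real

lemma tm_le_one (n : ℕ) : tm n ≤ 1 := Nat.le_of_lt_succ (Nat.mod_lt _ two_pos)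

lemma tm_two_mul (n : ℕ) : tm (2 * n) = tm n := by
  rcases Nat.eq_zero_or_pos n with rfl | hn
  · rfl
  · simp [tm, Nat.digits_def' one_lt_two (by omega : 0 < 2 * n)]

lemma tm_two_mul_add_one (n : ℕ) : tm (2 * n + 1) = 1 - tm n := by
  have hdiv : (2 * n + 1) / 2 = n := by omega
  simp only [tm, Nat.digits_def' one_lt_two (by omega : 0 < 2 * n + 1), List.sum_cons, hdiv]
  omega

def tmSign (n : ℕ) : ℤ := 1 - 2 * tm n

lemma tmSign_zero : tmSign 0 = 1 := rfl

lemma tmSign_two_mul (n : ℕ) : tmSign (2 * n) = tmSign n := by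
  simp [tmSign, tm_two_mul]

lemma tmSign_two_mul_add_one (n : ℕ) : tmSign (2 * n + 1) = -tmSign n := by
  have := tm_le_one n
  simp only [tmSign, tm_two_mul_add_one]
  omega

lemma abs_tmSign_le_one (n : ℕ) : |tmSign n| ≤ 1 := by
  have := tm_le_one n
  rw [abs_le, tmSign]
  omega

section SignedProd

variable {G : Type*} [DivisionCommMonoid G]

def signedProd (F : ℕ → G) (N : ℕ) : G := ∏ n ∈ range N, F n ^ tmSign n

lemma signedProd_mul (F H : ℕ → G) (N : ℕ) :
    signedProd (fun n => F n * H n) N = signedProd F N * signedProd H N := by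
  simp only [signedProd, mul_zpow, prod_mul_distrib]

lemma signedProd_div (F H : ℕ → G) (N : ℕ) :
    signedProd (fun n => F n / H n) N = signedProd F N / signedProd H N := by
  simp only [signedProd, div_zpow, prod_div_distrib]

lemma signedProd_two_mul (F : ℕ → G) (N : ℕ) :
    signedProd F (2 * N) = signedProd (fun m => F (2 * m) / F (2 * m + 1)) N := by
  induction N with
  | zero => simp [signedProd]
  | succ N ih =>
    rw [show 2 * (N + 1) = 2 * N + 1 + 1 by ring, signedProd, prod_range_succ, prod_range_succ,
      ← signedProd, ih, signedProd, signedProd, prod_range_succ, tmSign_two_mul,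
      tmSign_two_mul_add_one, zpow_neg, div_zpow, div_eq_mul_inv, mul_assoc]

end SignedProd

lemma exists_pos_tendsto_signedProd_of_summable_sub_one {d : ℕ → ℝ} (hd : ∀ n, 0 < d n)
    (hs : Summable fun n => d n - 1) : ∃ W, 0 < W ∧ Tendsto (signedProd d) atTop (𝓝 W) := by
  have hlog : Summable fun n => log (d n) := by
    simpa using summable_log_one_add_of_summable hs
  have hsign : Summable fun n => log (d n ^ tmSign n) := by
    refine hlog.abs.of_norm_bounded fun n => ?_
    rw [log_zpow, norm_mul, norm_eq_abs, norm_eq_abs, ← Int.cast_abs]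
    exact mul_le_of_le_one_left (abs_nonneg _) (by exact_mod_cast abs_tmSign_le_one n)
  exact ⟨_, exp_pos _,
    (hasProd_of_hasSum_log (fun n => zpow_pos (hd n) _) hsign.hasSum).tendsto_prod_nat⟩

lemma summable_inv_four_mul_add_mul {a b : ℝ} (ha : 1 ≤ a) (hb : 1 ≤ b) :
    Summable fun n : ℕ => ((4 * n + a) * (4 * n + b))⁻¹ := by
  have hsq : Summable fun n : ℕ => (((n + 1 : ℕ) : ℝ) ^ 2)⁻¹ :=
    (summable_nat_add_iff 1).mpr (summable_nat_pow_inv.mpr one_lt_two)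
  refine hsq.of_nonneg_of_le (fun n => by positivity) fun n => ?_
  have hn : (0 : ℝ) ≤ n := n.cast_nonneg
  gcongr
  push_cast
  nlinarith

/-- `n / (n + 1)`, except that the factor `0 / 1` is replaced by `1`. -/
noncomputable def quotSucc (n : ℕ) : ℝ := if n = 0 then 1 else n / (n + 1)

lemma quotSucc_pos (n : ℕ) : 0 < quotSucc n := by
  unfold quotSucc
  split_ifs with hn
  · exact one_pos
  · have : (0 : ℝ) < n := by exact_mod_cast Nat.pos_of_ne_zero hn
    positivity

lemma quotSucc_of_ne_zero {n : ℕ} (hn : n ≠ 0) : quotSucc n = n / (n + 1) := if_neg hn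

lemma quotSucc_two_mul_add_one_mul_two_mul {n : ℕ} (hn : n ≠ 0) :
    quotSucc (2 * n + 1) * quotSucc (2 * n) = quotSucc n := by
  have hn' : (0 : ℝ) < n := by exact_mod_cast Nat.pos_of_ne_zero hn
  rw [quotSucc_of_ne_zero hn, quotSucc_of_ne_zero (by omega), quotSucc_of_ne_zero (by omega)]
  field_simp
  push_cast
  ring

lemma signedProd_quotSucc_odd_mul_even {N : ℕ} (hN : 0 < N) :
    signedProd (fun n => quotSucc (2 * n + 1)) N * signedProd (fun n => quotSucc (2 * n)) N
      = signedProd quotSucc N / 2 := by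
  obtain ⟨N, rfl⟩ := Nat.exists_eq_add_of_lt hN
  rw [← signedProd_mul, signedProd, signedProd, prod_range_succ', prod_range_succ']
  simp only [quotSucc_two_mul_add_one_mul_two_mul (Nat.succ_ne_zero _), tmSign_zero]
  norm_num [quotSucc]
  ring

lemma signedProd_quotSucc_two_mul (N : ℕ) :
    signedProd quotSucc (2 * N)
      = signedProd (fun n => quotSucc (2 * n)) N / signedProd (fun n => quotSucc (2 * n + 1)) N := by
  rw [signedProd_two_mul, signedProd_div]

noncomputable def quadRatio (n : ℕ) : ℝ :=
  ((4 * (n : ℝ) + 1) * (4 * (n : ℝ) + 4)) / ((4 * (n : ℝ) + 2) * (4 * (n : ℝ) + 3))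

lemma quadRatio_pos (n : ℕ) : 0 < quadRatio n := by
  unfold quadRatio
  positivity

lemma quadRatio_sub_one (n : ℕ) : quadRatio n - 1 = -2 * ((4 * (n : ℝ) + 2) * (4 * n + 3))⁻¹ := by
  unfold quadRatio
  field_simp
  ring

lemma quotSucc_pair_odd_eq_quadRatio (m : ℕ) :
    quotSucc (2 * (2 * m) + 1) / quotSucc (2 * (2 * m + 1) + 1) = quadRatio m := by
  rw [quotSucc_of_ne_zero (by omega), quotSucc_of_ne_zero (by omega), quadRatio]
  field_simp
  push_cast
  ring

lemma quotSucc_pair_even_succ_sub_one (m : ℕ) :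
    quotSucc (2 * (2 * (m + 1))) / quotSucc (2 * (2 * (m + 1) + 1)) - 1
      = -2 * ((4 * (m : ℝ) + 5) * (4 * m + 6))⁻¹ := by
  rw [quotSucc_of_ne_zero (by omega), quotSucc_of_ne_zero (by omega)]
  field_simp
  push_cast
  ring

theorem tendsto_signedProd_quadRatio : Tendsto (signedProd quadRatio) atTop (𝓝 (√2)⁻¹) := by
  obtain ⟨W, hW, hWlim⟩ := exists_pos_tendsto_signedProd_of_summable_sub_one quadRatio_pos <| by
    simp_rw [quadRatio_sub_one]
    exact (summable_inv_four_mul_add_mul (a := 2) (b := 3) (by norm_num) (by norm_num)).mul_left _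
  obtain ⟨B, hB, hBlim⟩ := exists_pos_tendsto_signedProd_of_summable_sub_one
    (d := fun m => quotSucc (2 * (2 * m)) / quotSucc (2 * (2 * m + 1)))
    (fun m => div_pos (quotSucc_pos _) (quotSucc_pos _)) <| by
      refine (summable_nat_add_iff 1).mp ?_
      simp_rw [quotSucc_pair_even_succ_sub_one]
      exact (summable_inv_four_mul_add_mul (a := 5) (b := 6) (by norm_num) (by norm_num)).mul_left _
  set u := fun N => signedProd (fun n => quotSucc (2 * n + 1)) (2 * N)
  set v := fun N => signedProd (fun n => quotSucc (2 * n)) (2 * N)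
  have hu : Tendsto u atTop (𝓝 W) := by
    simpa only [u, signedProd_two_mul, quotSucc_pair_odd_eq_quadRatio] using hWlim
  have hv : Tendsto v atTop (𝓝 B) := by
    simpa only [v, signedProd_two_mul] using hBlim
  -- Robbins' identity `P Q = Q / (2 P)`, on partial products of length `4 M`
  have hfun : ∀ M, 0 < M → u (2 * M) * v (2 * M) = v M / u M / 2 := fun M hM => by
    rw [signedProd_quotSucc_odd_mul_even (by omega), signedProd_quotSucc_two_mul]
  have hdouble : Tendsto (fun M : ℕ => 2 * M) atTop atTop :=
    tendsto_id.const_mul_atTop' two_pos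
  have hWB : W * B = B / W / 2 := tendsto_nhds_unique
    (((hu.comp hdouble).mul (hv.comp hdouble)).congr' <|
      (eventually_gt_atTop 0).mono hfun)
    ((hv.div hu hW.ne').div_const 2)
  have hW2 : W ^ 2 = ((√2)⁻¹) ^ 2 := by
    field_simp at hWB ⊢
    rw [sq_sqrt zero_le_two]
    nlinarith
  rwa [(pow_left_inj₀ hW.le (by positivity) two_ne_zero).mp hW2] at hWlim

theorem tendsto_prod_mul_div_mul_Gamma {a b c d : ℝ} (ha : 0 < a) (hb : 0 < b) (hc : 0 < c)
    (hd : 0 < d) (habcd : a + b = c + d) :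
    Tendsto (fun N => ∏ j ∈ range N, ((a + j) * (b + j)) / ((c + j) * (d + j))) atTop
      (𝓝 (Gamma c * Gamma d / (Gamma a * Gamma b))) := by
  have hGammaSeq : ∀ N : ℕ, 0 < N → GammaSeq c N * GammaSeq d N / (GammaSeq a N * GammaSeq b N)
      = ∏ j ∈ range (N + 1), ((a + j) * (b + j)) / ((c + j) * (d + j)) := fun N hN => by
    have hN' : (0 : ℝ) < N := by exact_mod_cast hN
    have hpow : (N : ℝ) ^ c * (N : ℝ) ^ d = (N : ℝ) ^ a * (N : ℝ) ^ b := by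
      rw [← rpow_add hN', ← rpow_add hN', habcd]
    have hprod : ∀ s : ℝ, 0 < s → 0 < ∏ j ∈ range (N + 1), (s + j) :=
      fun s hs => prod_pos fun j _ => by positivity
    have := hprod a ha
    have := hprod b hb
    have := hprod c hc
    have := hprod d hd
    rw [prod_div_distrib, prod_mul_distrib, prod_mul_distrib]
    simp only [GammaSeq]
    field_simp
    rw [hpow]
  have hGamma : Gamma a * Gamma b ≠ 0 := (mul_pos (Gamma_pos_of_pos ha) (Gamma_pos_of_pos hb)).ne'
  refine (tendsto_add_atTop_iff_nat 1).mp <|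
    (((GammaSeq_tendsto_Gamma c).mul (GammaSeq_tendsto_Gamma d)).div
      ((GammaSeq_tendsto_Gamma a).mul (GammaSeq_tendsto_Gamma b)) hGamma).congr' ?_
  filter_upwards [eventually_gt_atTop 0] with N hN using hGammaSeq N hN

lemma tendsto_prod_quadRatio :
    Tendsto (fun N => ∏ n ∈ range N, quadRatio n) atTop
      (𝓝 (Gamma (1 / 2) * Gamma (3 / 4) / (Gamma (1 / 4) * Gamma 1))) := by
  convert tendsto_prod_mul_div_mul_Gamma (a := 1 / 4) (b := 1) (c := 1 / 2) (d := 3 / 4)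
    (by norm_num) one_pos (by norm_num) (by norm_num) (by norm_num) using 3 with N n
  rw [quadRatio]
  field_simp
  ring

lemma Gamma_one_fourth_mul_Gamma_three_fourths : Gamma (1 / 4) * Gamma (3 / 4) = π * √2 := by
  have h := Gamma_mul_Gamma_one_sub (1 / 4)
  rw [show (1 : ℝ) - 1 / 4 = 3 / 4 by norm_num, show π * (1 / 4) = π / 4 by ring,
    sin_pi_div_four] at h
  rw [h]
  field_simp
  norm_num

lemma sq_prod_pow_tm {G₀ : Type*} [CommGroupWithZero G₀] {x : ℕ → G₀} (hx : ∀ n, x n ≠ 0)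
    (N : ℕ) : (∏ n ∈ range N, x n ^ tm n) ^ 2 = (∏ n ∈ range N, x n) / signedProd x N := by
  rw [signedProd, ← prod_pow, ← prod_div_distrib]
  refine prod_congr rfl fun n _ => ?_
  have hexp : ((tm n * 2 : ℕ) : ℤ) = 1 - tmSign n := by
    rw [tmSign]
    push_cast
    ring
  rw [← pow_mul, ← zpow_natCast, hexp, zpow_sub₀ (hx n), zpow_one]

lemma Gamma_quotient_eq_sq :
    Gamma (1 / 2) * Gamma (3 / 4) / (Gamma (1 / 4) * Gamma 1) / (√2)⁻¹
      = (π ^ ((3 : ℝ) / 4) * √2 / Gamma (1 / 4)) ^ 2 := by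
  have h14 : 0 < Gamma (1 / 4) := Gamma_pos_of_pos (by norm_num)
  have hG34 : Gamma (3 / 4) = π * √2 / Gamma (1 / 4) := by
    rw [eq_div_iff h14.ne', mul_comm, Gamma_one_fourth_mul_Gamma_three_fourths]
  have hpow : (π ^ ((3 : ℝ) / 4)) ^ 2 = √π * π := by
    rw [← rpow_natCast, ← rpow_mul pi_pos.le, sqrt_eq_rpow, ← rpow_add_one pi_pos.ne']
    norm_num
  rw [Gamma_one_half_eq, Gamma_one, hG34, div_pow, mul_pow, hpow]
  field_simp

theorem prod_tn_gamma :
    Tendsto (fun N => ∏ n ∈ Finset.range N,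
        ((((4 * (n : ℝ) + 1) * (4 * (n : ℝ) + 4)) / ((4 * (n : ℝ) + 2) * (4 * (n : ℝ) + 3)))) ^ (tm n))
      atTop (𝓝 (Real.pi ^ ((3 : ℝ) / 4) * Real.sqrt 2 / Real.Gamma (1 / 4))) := by
  have hsq : Tendsto (fun N => (∏ n ∈ range N, quadRatio n ^ tm n) ^ 2) atTop
      (𝓝 ((π ^ ((3 : ℝ) / 4) * √2 / Gamma (1 / 4)) ^ 2)) := by
    simp_rw [sq_prod_pow_tm fun n => (quadRatio_pos n).ne', ← Gamma_quotient_eq_sq]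
    exact tendsto_prod_quadRatio.div tendsto_signedProd_quadRatio (by positivity)
  have hlim : 0 < π ^ ((3 : ℝ) / 4) * √2 / Gamma (1 / 4) := by
    have := Gamma_pos_of_pos (by norm_num : (0 : ℝ) < 1 / 4)
    positivity
  have hroot := hsq.sqrt
  simp only [sqrt_sq (prod_nonneg fun n _ => pow_nonneg (quadRatio_pos n).le _),
    sqrt_sq hlim.le] at hroot
  exact hroot
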